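/- Let V ⊂ ℝ^d be a subspace, S ⊂ V a subspace, h*:V→ℝ a polynomial and f*(x)=h*(x_V) with x_V the orthogonal projection of x onto V. Let σ:ℝ→ℝ be of class C¹ with bounded derivative. If h* satisfies the reflective property with respect to S and σ, i.e. E_{z∼N(0,I_V)}[h*(z)·σ'(u+vᵀz_S^⊥)·z_S] = 0 for all u ∈ ℝ and v ∈ V (with z_S the orthogonal projection of z onto S and z_S^⊥ = z − z_S), then E_{x∼N(0,I_d)}[f*(x)·σ'(wᵀx_S^⊥)·x_S] = 0 for every w ∈ ℝ^d, where x_S is the orthogonal projection of x onto S and x_S^⊥ = x − x_S. -/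

import Mathlib

open MeasureTheory Real RealInnerProductSpace

noncomputable section

abbrev Eu (d : ℕ) : Type := EuclideanSpace ℝ (Fin d)

/-- Centered isotropic Gaussian measure on `ℝ^d` with covariance `c • I_d`. -/
def gaussCov (d : ℕ) (c : ℝ) : Measure (Eu d) :=
  volume.withDensity fun x =>
    ENNReal.ofReal ((2 * π * c) ^ (-(d : ℝ) / 2) * Real.exp (-‖x‖ ^ 2 / (2 * c)))

/-- The standard Gaussian measure `N(0, I_d)` on `ℝ^d`. -/
def stdGauss (d : ℕ) : Measure (Eu d) := gaussCov d 1

/-- Orthogonal projection onto a subspace, viewed as a map of the ambient space. -/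
def projSub {d : ℕ} (S : Submodule ℝ (Eu d)) (x : Eu d) : Eu d :=
  (S.orthogonalProjectionOnto x : Eu d)

/-- Standard Gaussian of a subspace `S`, i.e. the law of the orthogonal projection onto `S`
of a standard Gaussian of the ambient space. -/
def gaussOn {d : ℕ} (S : Submodule ℝ (Eu d)) : Measure (Eu d) :=
  (stdGauss d).map (projSub S)

/-- Mean-field two-layer network. -/
def fNN {d : ℕ} (σ : ℝ → ℝ) (ρ : Measure (ℝ × Eu d)) (x : Eu d) : ℝ :=
  ∫ θ, θ.1 * σ ⟪θ.2, x⟫ ∂ρ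

/-- The loss functional. -/
def loss {d : ℕ} (σ : ℝ → ℝ) (fs : Eu d → ℝ) (ρ : Measure (ℝ × Eu d)) : ℝ :=
  (1 / 2) * ∫ x, (fs x - fNN σ ρ x) ^ 2 ∂stdGauss d

def Phi {d : ℕ} (σ : ℝ → ℝ) (fs : Eu d → ℝ) (ρ : Measure (ℝ × Eu d)) (θ : ℝ × Eu d) : ℝ :=
  θ.1 * ∫ x, (fNN σ ρ x - fs x) * σ ⟪θ.2, x⟫ ∂stdGauss d

/-- `∂_a Φ`. -/
def PhiA {d : ℕ} (σ : ℝ → ℝ) (fs : Eu d → ℝ) (ρ : Measure (ℝ × Eu d)) (θ : ℝ × Eu d) : ℝ :=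
  deriv (fun a => Phi σ fs ρ (a, θ.2)) θ.1

/-- `∇_w Φ`. -/
def PhiW {d : ℕ} (σ : ℝ → ℝ) (fs : Eu d → ℝ) (ρ : Measure (ℝ × Eu d)) (θ : ℝ × Eu d) : Eu d :=
  gradient (fun w => Phi σ fs ρ (θ.1, w)) θ.2

/-- Weak solution of the mean-field flow `∂_t ρ_t = ∇_θ · (ρ_t ξ(t) ∇_θ Φ(θ; ρ_t))`. -/
def IsWeakSolution {d : ℕ} (σ : ℝ → ℝ) (fs : Eu d → ℝ) (ξa ξw : ℝ → ℝ)
    (ρ : ℝ → Measure (ℝ × Eu d)) (ρ0 : Measure (ℝ × Eu d)) : Prop :=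
  ρ 0 = ρ0 ∧
  ∀ η : (ℝ × Eu d) × ℝ → ℝ, ContDiff ℝ (⊤ : ℕ∞) η → HasCompactSupport η →
    tsupport η ⊆ Set.univ ×ˢ Set.Ioi (0 : ℝ) →
    ∫ t in Set.Ioi (0 : ℝ), (∫ θ,
        (-(deriv (fun s => η (θ, s)) t)
          + ξa t * deriv (fun a => η ((a, θ.2), t)) θ.1 * PhiA σ fs (ρ t) θ
          + ξw t * ⟪gradient (fun w => η ((θ.1, w), t)) θ.2, PhiW σ fs (ρ t) θ⟫) ∂(ρ t)) = 0

/-- Assumption A: regularity/boundedness of the activation and learning rates, and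
properties of the first-layer initialization `ρa`. -/
def AssumptionA (σ ξa ξw : ℝ → ℝ) (Kσ Kξ Kρ : ℝ) (ρa : Measure ℝ) : Prop :=
  ContDiff ℝ 2 σ ∧
  (∀ x, |σ x| ≤ Kσ ∧ |deriv σ x| ≤ Kσ ∧ |deriv (deriv σ) x| ≤ Kσ) ∧
  (∀ t, 0 ≤ ξa t ∧ ξa t ≤ Kξ ∧ 0 ≤ ξw t ∧ ξw t ≤ Kξ) ∧
  (∃ K : NNReal, LipschitzWith K ξa ∧ LipschitzWith K ξw) ∧
  (∫⁻ t in Set.Ioi (0 : ℝ), ENNReal.ofReal (ξa t) = ⊤) ∧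
  (∫⁻ t in Set.Ioi (0 : ℝ), ENNReal.ofReal (ξw t) = ⊤) ∧
  IsProbabilityMeasure ρa ∧ ρa.map (fun a => -a) = ρa ∧
  ρa (Set.Icc (-Kρ) Kρ)ᶜ = 0

/-- A function on `ℝ^p` is a polynomial function. -/
def IsPolyFun {p : ℕ} (h : Eu p → ℝ) : Prop :=
  ∃ P : MvPolynomial (Fin p) ℝ, ∀ z, h z = MvPolynomial.eval (fun i => z i) P

/-- Squared 2-Wasserstein-type distance from the paper: infimum over couplings of
`∬ (|a-ã|² + ‖w-w̃‖²) dγ`. -/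
def W2sq {d : ℕ} (μ ν : Measure (ℝ × Eu d)) : ℝ :=
  sInf { r : ℝ | ∃ γ : Measure ((ℝ × Eu d) × (ℝ × Eu d)),
    γ.map Prod.fst = μ ∧ γ.map Prod.snd = ν ∧
    r = ∫ q, ((q.1.1 - q.2.1) ^ 2 + ‖q.1.2 - q.2.2‖ ^ 2) ∂γ }

/-- The subspace-sparse target `f*(x) = h*(x_V)`, where `h*` on `V` is obtained from a
polynomial `h` on `ℝ^p` through a linear isometry `φ : ℝ^p ≃ V`. -/
def pullTarget {p d : ℕ} (V : Submodule ℝ (Eu d)) (φ : Eu p ≃ₗᵢ[ℝ] V)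
    (h : Eu p → ℝ) : Eu d → ℝ :=
  fun x => h (φ.symm (V.orthogonalProjectionOnto x))

end

noncomputable section

open MeasureTheory Real RealInnerProductSpace

open scoped ENNReal

section AuxLemmas

variable {d : ℕ}

lemma map_withDensity_equiv {α β : Type*} [MeasurableSpace α] [MeasurableSpace β]
    (μ : Measure α) (e : α ≃ᵐ β) (f : β → ℝ≥0∞) (hf : Measurable f) :
    (μ.withDensity (f ∘ e)).map e = (μ.map e).withDensity f := by
  ext s hs
  rw [Measure.map_apply e.measurable hs, withDensity_apply _ (e.measurable hs),
    withDensity_apply _ hs]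
  exact (setLIntegral_map hs hf e.measurable).symm

lemma lintegral_pi_prod {μ : Measure ℝ} [SigmaFinite μ] : ∀ {n : ℕ} (f : Fin n → ℝ → ℝ≥0∞),
    (∀ i, Measurable (f i)) →
    ∫⁻ y, ∏ i, f i (y i) ∂(Measure.pi fun _ : Fin n => μ) = ∏ i, ∫⁻ x, f i x ∂μ := by
  intro n
  induction n with
  | zero => intro f _; simp
  | succ n ih =>
    intro f hf
    have h := (measurePreserving_piFinSuccAbove (fun _ : Fin (n + 1) => μ) 0).symm
    rw [← h.lintegral_comp (f := fun y => ∏ i, f i (y i))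
      (Finset.measurable_prod _ fun i _ => (hf i).comp (measurable_pi_apply i))]
    simp_rw [MeasurableEquiv.piFinSuccAbove_symm_apply, Fin.insertNthEquiv,
      Fin.prod_univ_succ, Fin.insertNth_zero]
    simp only [Fin.zero_succAbove, Function.comp_def, Equiv.coe_fn_mk, Fin.cons_zero,
      Fin.cons_succ]
    simp only [cast_eq]
    rw [MeasureTheory.lintegral_prod_mul (f := fun x => f 0 x)
      (g := fun (y : Fin n → ℝ) => ∏ i : Fin n, f i.succ (y i))
      (hf 0).aemeasurable
      (Finset.measurable_prod _ fun i _ => (hf i.succ).comp (measurable_pi_apply i)).aemeasurable,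
      ih (fun i => f i.succ) (fun i => hf i.succ)]

lemma pi_gauss (n : ℕ) : (Measure.pi fun _ : Fin n => ProbabilityTheory.gaussianReal 0 1)
    = (volume : Measure (Fin n → ℝ)).withDensity
        fun y => ∏ i, ProbabilityTheory.gaussianPDF 0 1 (y i) := by
  refine (Measure.pi_eq fun s hs => ?_)
  rw [withDensity_apply _ (MeasurableSet.univ_pi hs),
    ← lintegral_indicator (MeasurableSet.univ_pi hs)]
  have hind : ∀ y : Fin n → ℝ, (Set.univ.pi s).indicator
      (fun y => ∏ i, ProbabilityTheory.gaussianPDF 0 1 (y i)) y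
      = ∏ i, (s i).indicator (ProbabilityTheory.gaussianPDF 0 1) (y i) := by
    intro y
    by_cases hy : y ∈ Set.univ.pi s
    · rw [Set.indicator_of_mem hy]
      exact Finset.prod_congr rfl fun i _ => (Set.indicator_of_mem (hy i trivial) _).symm
    · rw [Set.indicator_of_notMem hy]
      simp only [Set.mem_pi, Set.mem_univ, forall_true_left, not_forall] at hy
      obtain ⟨i, hi⟩ := hy
      exact (Finset.prod_eq_zero (Finset.mem_univ i) (Set.indicator_of_notMem hi _)).symm
  simp_rw [hind]
  rw [volume_pi, lintegral_pi_prod _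
    (fun i => (ProbabilityTheory.measurable_gaussianPDF 0 1).indicator (hs i))]
  refine Finset.prod_congr rfl fun i _ => ?_
  rw [lintegral_indicator (hs i), ProbabilityTheory.gaussianReal_of_var_ne_zero 0 one_ne_zero,
    withDensity_apply _ (hs i)]

lemma stdGauss_eq_map (b : OrthonormalBasis (Fin d) ℝ (Eu d)) :
    stdGauss d = (Measure.pi fun _ : Fin d => ProbabilityTheory.gaussianReal 0 1).map
      (fun y => ∑ i, y i • b i) := by
  classical
  set g : Eu d → ℝ≥0∞ := fun x =>
    ENNReal.ofReal ((2 * π * 1) ^ (-(d : ℝ) / 2) * Real.exp (-‖x‖ ^ 2 / (2 * 1))) with hg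
  set E : (Fin d → ℝ) ≃ᵐ Eu d := ((MeasurableEquiv.toLp 2 (Fin d → ℝ)).trans
    b.repr.symm.toHomeomorph.toMeasurableEquiv) with hEdef
  have hEfun : (fun y : Fin d → ℝ => ∑ i, y i • b i) = ⇑E := by
    funext y
    show _ = b.repr.symm (MeasurableEquiv.toLp 2 (Fin d → ℝ) y)
    rw [← OrthonormalBasis.sum_repr_symm]
    rfl
  have hpres : MeasurePreserving E volume volume := by
    have h1 := (EuclideanSpace.volume_preserving_symm_measurableEquiv_toLp (Fin d)).symm
    have h2 := (b.repr.symm : EuclideanSpace ℝ (Fin d) ≃ₗᵢ[ℝ] Eu d).measurePreserving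
    exact h2.comp h1
  have hnorm : ∀ y : Fin d → ℝ, ‖E y‖ ^ 2 = ∑ i, (y i) ^ 2 := by
    intro y
    show ‖b.repr.symm (MeasurableEquiv.toLp 2 (Fin d → ℝ) y)‖ ^ 2 = _
    rw [LinearIsometryEquiv.norm_map, EuclideanSpace.norm_eq,
      Real.sq_sqrt (Finset.sum_nonneg fun i _ => sq_nonneg _)]
    refine Finset.sum_congr rfl fun i _ => ?_
    rw [Real.norm_eq_abs, sq_abs]
    rfl
  have hdens : (fun y : Fin d → ℝ => ∏ i, ProbabilityTheory.gaussianPDF 0 1 (y i)) = g ∘ E := by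
    funext y
    have h1 : ∏ i, ProbabilityTheory.gaussianPDF 0 1 (y i)
        = ENNReal.ofReal (∏ i, ProbabilityTheory.gaussianPDFReal 0 1 (y i)) := by
      rw [ENNReal.ofReal_prod_of_nonneg
        fun i _ => ProbabilityTheory.gaussianPDFReal_nonneg 0 1 (y i)]
      rfl
    rw [Function.comp_apply, h1, hg]
    congr 1
    simp only [ProbabilityTheory.gaussianPDFReal, NNReal.coe_one, sub_zero, mul_one]
    rw [Finset.prod_mul_distrib, Finset.prod_const, ← Real.exp_sum, Finset.card_univ,
      Fintype.card_fin, hnorm y]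
    have h2π : (0:ℝ) ≤ 2 * π := by positivity
    have hconst : ((√(2*π))⁻¹ : ℝ)^d = (2*π) ^ (-(d:ℝ)/2) := by
      rw [Real.sqrt_eq_rpow, ← Real.rpow_neg h2π,
        ← Real.rpow_natCast ((2*π) ^ (-(1/2) : ℝ)) d, ← Real.rpow_mul h2π]
      congr 1
      ring
    rw [hconst]
    congr 1
    simp [neg_div, Finset.sum_div, Finset.sum_neg_distrib]
  rw [hEfun]
  show gaussCov d 1 = _
  rw [gaussCov, ← hg, ← hpres.map_eq, ← map_withDensity_equiv volume E g
    (by apply Measurable.ennreal_ofReal; fun_prop), pi_gauss d, hdens]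

lemma exists_adapted_basis (V : Submodule ℝ (Eu d)) :
    ∃ b : OrthonormalBasis (Fin d) ℝ (Eu d), ∀ i, b i ∈ V ∨ b i ∈ Vᗮ := by
  classical
  set A : Bool → Submodule ℝ (Eu d) := fun t => cond t V Vᗮ with hA
  have horth : OrthogonalFamily ℝ (fun t => A t) (fun t => (A t).subtypeₗᵢ) := by
    intro i j hij v w
    match i, j with
    | true, true => exact absurd rfl hij
    | false, false => exact absurd rfl hij
    | true, false =>
      exact ((Submodule.mem_orthogonal V (w : Eu d)).1 w.2 (v : Eu d) v.2)
    | false, true =>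
      rw [real_inner_comm]
      exact ((Submodule.mem_orthogonal V (v : Eu d)).1 v.2 (w : Eu d) w.2)
  have hint : DirectSum.IsInternal A := by
    rw [DirectSum.isInternal_submodule_iff_isCompl A (i := true) (j := false)
      (by simp) (by ext t; cases t <;> simp)]
    exact Submodule.isCompl_orthogonal_of_hasOrthogonalProjection
  have hn : Module.finrank ℝ (Eu d) = d := finrank_euclideanSpace_fin
  refine ⟨hint.subordinateOrthonormalBasis hn horth, fun i => ?_⟩
  have hmem := hint.subordinateOrthonormalBasis_subordinate hn i horth
  cases hidx : hint.subordinateOrthonormalBasisIndex hn i horth with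
  | true => left; rw [hidx] at hmem; exact hmem
  | false => right; rw [hidx] at hmem; exact hmem

lemma continuous_projSub (S : Submodule ℝ (Eu d)) : Continuous (projSub S) :=
  (S.subtypeL.comp (S.orthogonalProjectionOnto)).continuous

lemma projSub_smul_sum (S : Submodule ℝ (Eu d)) (b : Fin d → Eu d) (y : Fin d → ℝ) :
    projSub S (∑ i, y i • b i) = ∑ i, y i • projSub S (b i) := by
  have h0 : projSub S (∑ i, y i • b i)
      = (S.subtypeL.comp (S.orthogonalProjectionOnto)) (∑ i, y i • b i) := rfl
  rw [h0, _root_.map_sum]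
  exact Finset.sum_congr rfl fun i _ => ContinuousLinearMap.map_smul _ _ _

instance stdGauss_prob (d : ℕ) : IsProbabilityMeasure (stdGauss d) := by
  obtain ⟨b, -⟩ := exists_adapted_basis (⊥ : Submodule ℝ (Eu d))
  rw [stdGauss_eq_map b]
  exact Measure.isProbabilityMeasure_map
    (Finset.measurable_sum _ fun i _ =>
      (measurable_pi_apply i).smul_const _).aemeasurable

instance gaussOn_prob (S : Submodule ℝ (Eu d)) : IsProbabilityMeasure (gaussOn S) :=
  Measure.isProbabilityMeasure_map (continuous_projSub S).measurable.aemeasurable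

lemma gauss_decomp (V : Submodule ℝ (Eu d)) :
    (stdGauss d).map (fun x => (projSub Vᗮ x, projSub V x))
      = (gaussOn Vᗮ).prod (gaussOn V) := by
  classical
  obtain ⟨b, hb⟩ := exists_adapted_basis V
  set p : Fin d → Prop := fun i => b i ∈ V with hp
  set e : (Fin d → ℝ) → Eu d := fun y => ∑ i, y i • b i with he
  have hemeas : Measurable e := Finset.measurable_sum _ fun i _ =>
    (measurable_pi_apply i).smul_const _
  have hprojV : ∀ i, projSub V (b i) = if p i then b i else 0 := by
    intro i
    by_cases hi : p i
    · rw [if_pos hi]; exact Submodule.starProjection_eq_self_iff.2 hi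
    · rw [if_neg hi]
      have hiV : b i ∈ Vᗮ := (hb i).resolve_left hi
      show (V.orthogonalProjectionOnto (b i) : Eu d) = 0
      rw [Submodule.orthogonalProjectionOnto_apply_of_mem_orthogonal hiV]
      rfl
  have hprojVp : ∀ i, projSub Vᗮ (b i) = if p i then 0 else b i := by
    intro i
    by_cases hi : p i
    · rw [if_pos hi]
      show (Vᗮ.orthogonalProjectionOnto (b i) : Eu d) = 0
      rw [Submodule.orthogonalProjectionOnto_apply_of_mem_orthogonal
        (V.le_orthogonal_orthogonal hi)]
      rfl
    · rw [if_neg hi]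
      exact Submodule.starProjection_eq_self_iff.2 ((hb i).resolve_left hi)
  set g₁ : ({i // p i} → ℝ) → Eu d := fun a => ∑ j, a j • b j with hg₁
  set g₂ : ({i // ¬ p i} → ℝ) → Eu d := fun c => ∑ j, c j • b j with hg₂
  have hg₁meas : Measurable g₁ := Finset.measurable_sum _ fun i _ =>
    (measurable_pi_apply i).smul_const _
  have hg₂meas : Measurable g₂ := Finset.measurable_sum _ fun i _ =>
    (measurable_pi_apply i).smul_const _
  have hsum₁ : ∀ y : Fin d → ℝ, projSub V (e y) = g₁ (fun j => y j) := by
    intro y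
    rw [he, projSub_smul_sum]
    simp only [hprojV, smul_ite, smul_zero]
    rw [← Finset.sum_filter, Finset.sum_subtype (p := p) (Finset.univ.filter p)
      (fun x => by simp) (fun i => y i • b i)]
  have hsum₂ : ∀ y : Fin d → ℝ, projSub Vᗮ (e y) = g₂ (fun j => y j) := by
    intro y
    rw [he, projSub_smul_sum]
    simp only [hprojVp, smul_ite, smul_zero]
    have hswap : ∀ x, (if p x then (0 : Eu d) else y x • b x)
        = if ¬ p x then y x • b x else 0 := fun x => by by_cases hx : p x <;> simp [hx]
    simp_rw [hswap]
    rw [← Finset.sum_filter, Finset.sum_subtype (p := fun i => ¬ p i)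
      (Finset.univ.filter (fun i => ¬ p i)) (fun x => by simp) (fun i => y i • b i)]
  set q := MeasurableEquiv.piEquivPiSubtypeProd (fun _ : Fin d => ℝ) p with hq
  have hqpres := measurePreserving_piEquivPiSubtypeProd
    (fun _ : Fin d => ProbabilityTheory.gaussianReal 0 1) p
  set νp := (Measure.pi fun _ : {i // p i} => ProbabilityTheory.gaussianReal 0 1) with hνp
  set νn := (Measure.pi fun _ : {i // ¬ p i} => ProbabilityTheory.gaussianReal 0 1) with hνn
  have hΦmeas : Measurable (fun x : Eu d => (projSub Vᗮ x, projSub V x)) :=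
    ((continuous_projSub Vᗮ).prodMk (continuous_projSub V)).measurable
  have hcomp : (fun x : Eu d => (projSub Vᗮ x, projSub V x)) ∘ e
      = (Prod.map g₂ g₁) ∘ Prod.swap ∘ ⇑q := by
    funext y
    simp only [Function.comp_apply]
    exact Prod.ext (hsum₂ y) (hsum₁ y)
  rw [stdGauss_eq_map b, ← he, Measure.map_map hΦmeas hemeas, hcomp,
    ← Measure.map_map (hg₂meas.prodMap hg₁meas)
      (measurable_swap.comp q.measurable),
    ← Measure.map_map measurable_swap q.measurable, hqpres.map_eq, Measure.prod_swap,
    ← Measure.map_prod_map _ _ hg₂meas hg₁meas]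
  set r₁ : (Fin d → ℝ) → ({i // p i} → ℝ) := fun y j => y j with hr₁
  set r₂ : (Fin d → ℝ) → ({i // ¬ p i} → ℝ) := fun y j => y j with hr₂
  have hr₁meas : Measurable r₁ :=
    measurable_pi_lambda _ fun j => measurable_pi_apply (j : Fin d)
  have hr₂meas : Measurable r₂ :=
    measurable_pi_lambda _ fun j => measurable_pi_apply (j : Fin d)
  have hV : gaussOn V = νp.map g₁ := by
    have h1 : projSub V ∘ e = g₁ ∘ r₁ := funext hsum₁
    rw [gaussOn, stdGauss_eq_map b, ← he,
      Measure.map_map (continuous_projSub V).measurable hemeas, h1,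
      ← Measure.map_map hg₁meas hr₁meas]
    congr 1
    have h2 : r₁ = Prod.fst ∘ ⇑q := rfl
    rw [h2, ← Measure.map_map measurable_fst q.measurable, hqpres.map_eq,
      Measure.map_fst_prod, measure_univ, one_smul]
  have hVp : gaussOn Vᗮ = νn.map g₂ := by
    have h1 : projSub Vᗮ ∘ e = g₂ ∘ r₂ := funext hsum₂
    rw [gaussOn, stdGauss_eq_map b, ← he,
      Measure.map_map (continuous_projSub Vᗮ).measurable hemeas, h1,
      ← Measure.map_map hg₂meas hr₂meas]
    congr 1
    have h2 : r₂ = Prod.snd ∘ ⇑q := rfl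
    rw [h2, ← Measure.map_map measurable_snd q.measurable, hqpres.map_eq,
      Measure.map_snd_prod, measure_univ, one_smul]
  rw [hV, hVp]

lemma exists_poly_bound (P : MvPolynomial (Fin d) ℝ) :
    ∃ C N : ℕ, ∀ z : Eu d,
      |MvPolynomial.eval (fun i => z i) P| ≤ C * (1 + ‖z‖) ^ N := by
  induction P using MvPolynomial.induction_on with
  | C a =>
    refine ⟨⌈|a|⌉₊, 0, fun z => ?_⟩
    simp only [MvPolynomial.eval_C, pow_zero, mul_one]
    exact Nat.le_ceil _
  | add P Q hP hQ =>
    obtain ⟨C1, N1, h1⟩ := hP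
    obtain ⟨C2, N2, h2⟩ := hQ
    refine ⟨C1 + C2, max N1 N2, fun z => ?_⟩
    have hz : (1:ℝ) ≤ 1 + ‖z‖ := le_add_of_nonneg_right (norm_nonneg _)
    have e1 : (C1:ℝ) * (1 + ‖z‖) ^ N1 ≤ C1 * (1 + ‖z‖) ^ max N1 N2 := by
      apply mul_le_mul_of_nonneg_left (pow_le_pow_right₀ hz (le_max_left _ _))
        (by positivity)
    have e2 : (C2:ℝ) * (1 + ‖z‖) ^ N2 ≤ C2 * (1 + ‖z‖) ^ max N1 N2 := by
      apply mul_le_mul_of_nonneg_left (pow_le_pow_right₀ hz (le_max_right _ _))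
        (by positivity)
    calc |MvPolynomial.eval (fun i => z i) (P + Q)|
        ≤ |MvPolynomial.eval (fun i => z i) P| + |MvPolynomial.eval (fun i => z i) Q| := by
          rw [map_add]; exact abs_add_le _ _
      _ ≤ C1 * (1 + ‖z‖) ^ N1 + C2 * (1 + ‖z‖) ^ N2 := add_le_add (h1 z) (h2 z)
      _ ≤ (↑(C1 + C2)) * (1 + ‖z‖) ^ max N1 N2 := by
          push_cast; rw [add_mul]; exact add_le_add e1 e2
  | mul_X P i hP =>
    obtain ⟨C, N, h1⟩ := hP
    refine ⟨C, N + 1, fun z => ?_⟩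
    have h2 : |z i| ^ 2 ≤ ‖z‖ ^ 2 := by
      rw [EuclideanSpace.norm_eq, Real.sq_sqrt (by positivity)]
      calc |z i| ^ 2 = ‖z i‖ ^ 2 := by rw [Real.norm_eq_abs]
        _ ≤ ∑ j, ‖z j‖ ^ 2 :=
          Finset.single_le_sum (f := fun j => ‖z j‖ ^ 2) (fun j _ => sq_nonneg _)
            (Finset.mem_univ i)
    have hzi : |z i| ≤ 1 + ‖z‖ := by nlinarith [abs_nonneg (z i), norm_nonneg z]
    calc |MvPolynomial.eval (fun i => z i) (P * MvPolynomial.X i)|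
        = |MvPolynomial.eval (fun i => z i) P| * |z i| := by
          rw [map_mul, abs_mul, MvPolynomial.eval_X]
      _ ≤ (C * (1 + ‖z‖) ^ N) * (1 + ‖z‖) :=
          mul_le_mul (h1 z) hzi (abs_nonneg _) (by positivity)
      _ = C * (1 + ‖z‖) ^ (N + 1) := by ring

lemma integrable_exp_neg_quarter (d : ℕ) :
    Integrable (fun x : Eu d => Real.exp (-‖x‖ ^ 2 / 4)) (volume : Measure (Eu d)) := by
  have hpi : Integrable (fun y : Fin d → ℝ => ∏ i, Real.exp (-(1/4 : ℝ) * (y i) ^ 2))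
      (volume : Measure (Fin d → ℝ)) :=
    Integrable.fintype_prod (f := fun _ (t : ℝ) => Real.exp (-(1/4 : ℝ) * t ^ 2))
      (fun i => integrable_exp_neg_mul_sq (by norm_num))
  have hpres := EuclideanSpace.volume_preserving_symm_measurableEquiv_toLp (Fin d)
  have hcomp := (hpres.integrable_comp_emb
    (MeasurableEquiv.toLp 2 (Fin d → ℝ)).symm.measurableEmbedding
    (g := fun y : Fin d → ℝ => ∏ i, Real.exp (-(1/4 : ℝ) * (y i) ^ 2))).2 hpi
  have heq : (fun x : Eu d => Real.exp (-‖x‖ ^ 2 / 4))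
      = (fun y : Fin d → ℝ => ∏ i, Real.exp (-(1/4 : ℝ) * (y i) ^ 2))
        ∘ ⇑(MeasurableEquiv.toLp 2 (Fin d → ℝ)).symm := by
    funext x
    have hx : ‖x‖ ^ 2 = ∑ i, (x i) ^ 2 := by
      rw [EuclideanSpace.norm_eq, Real.sq_sqrt (by positivity)]
      exact Finset.sum_congr rfl fun i _ => by rw [Real.norm_eq_abs, sq_abs]
    simp only [Function.comp_apply]
    rw [← Real.exp_sum]
    congr 1
    rw [hx, neg_div, Finset.sum_div, ← Finset.sum_neg_distrib]
    refine Finset.sum_congr rfl fun i _ => ?_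
    show -((fun t : ℝ => t) (x i) ^ 2 / 4) = -(1/4 : ℝ) * (x i) ^ 2
    ring
  rw [heq]
  exact hcomp

lemma integrable_one_add_pow (d M : ℕ) :
    Integrable (fun x : Eu d => (1 + ‖x‖) ^ M) (stdGauss d) := by
  have hmeasd : Measurable fun x : Eu d =>
      ENNReal.ofReal ((2 * π * 1) ^ (-(d : ℝ) / 2) * Real.exp (-‖x‖ ^ 2 / (2 * 1))) := by
    apply Measurable.ennreal_ofReal
    fun_prop
  rw [stdGauss, gaussCov, integrable_withDensity_iff hmeasd
    (Filter.Eventually.of_forall fun x => ENNReal.ofReal_lt_top)]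
  set A : ℝ := (2 * π * 1) ^ (-(d : ℝ) / 2) with hA
  have hA0 : 0 < A := by rw [hA]; positivity
  have hbound : ∀ x : Eu d,
      ‖(1 + ‖x‖) ^ M * (ENNReal.ofReal (A * Real.exp (-‖x‖ ^ 2 / (2 * 1)))).toReal‖
        ≤ (A * Real.exp ((M : ℝ) ^ 2)) * Real.exp (-‖x‖ ^ 2 / 4) := by
    intro x
    have hx0 : (0:ℝ) ≤ ‖x‖ := norm_nonneg x
    rw [ENNReal.toReal_ofReal (by positivity), Real.norm_eq_abs,
      abs_of_nonneg (by positivity)]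
    have h1 : (1 + ‖x‖) ^ M ≤ Real.exp ((M : ℝ) * ‖x‖) := by
      calc (1 + ‖x‖) ^ M ≤ Real.exp ‖x‖ ^ M :=
            pow_le_pow_left₀ (by positivity) (by linarith [Real.add_one_le_exp ‖x‖]) M
        _ = Real.exp ((M : ℝ) * ‖x‖) := (Real.exp_nat_mul _ _).symm
    have h2 : (M : ℝ) * ‖x‖ ≤ (M : ℝ) ^ 2 + ‖x‖ ^ 2 / 4 := by
      nlinarith [sq_nonneg ((M:ℝ) - ‖x‖/2)]
    calc (1 + ‖x‖) ^ M * (A * Real.exp (-‖x‖ ^ 2 / (2 * 1)))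
        ≤ Real.exp ((M : ℝ) ^ 2 + ‖x‖ ^ 2 / 4) * (A * Real.exp (-‖x‖ ^ 2 / (2 * 1))) := by
          apply mul_le_mul_of_nonneg_right (le_trans h1 (Real.exp_le_exp.2 h2)) (by positivity)
      _ = (A * Real.exp ((M : ℝ) ^ 2))
            * (Real.exp (‖x‖ ^ 2 / 4) * Real.exp (-‖x‖ ^ 2 / (2 * 1))) := by
          rw [Real.exp_add]; ring
      _ = (A * Real.exp ((M : ℝ) ^ 2)) * Real.exp (-‖x‖ ^ 2 / 4) := by
          rw [← Real.exp_add]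
          congr 2
          ring
  refine Integrable.mono' (((integrable_exp_neg_quarter d).const_mul _)) ?_
    (Filter.Eventually.of_forall hbound)
  exact (((measurable_const.add measurable_norm).pow_const M).mul
    hmeasd.ennreal_toReal).aestronglyMeasurable

lemma norm_projSub_le (S : Submodule ℝ (Eu d)) (x : Eu d) : ‖projSub S x‖ ≤ ‖x‖ := by
  calc ‖projSub S x‖ = ‖S.orthogonalProjectionOnto x‖ := rfl
    _ ≤ ‖S.orthogonalProjectionOnto‖ * ‖x‖ := (S.orthogonalProjectionOnto).le_opNorm x
    _ ≤ 1 * ‖x‖ := mul_le_mul_of_nonneg_right (Submodule.orthogonalProjectionOnto_norm_le S) (norm_nonneg x)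
    _ = ‖x‖ := one_mul _

end AuxLemmas


/-- **The reflective property implies the ambient-space condition.**
Let `S ⊆ V ⊆ ℝ^d` be subspaces, `h* : V → ℝ` a polynomial (a polynomial function of the
ambient space) and `f*(x) = h*(x_V)`. If `h*` satisfies the reflective property with
respect to `S` and `σ`, then `E_{x ∼ N(0,I_d)}[f*(x) · σ'(wᵀ x_S^⊥) · x_S] = 0` for
every `w ∈ ℝ^d`. -/
theorem stmt_16 (d : ℕ) (V S : Submodule ℝ (Eu d)) (hSV : S ≤ V)
    (h : Eu d → ℝ) (hpoly : IsPolyFun h)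
    (σ : ℝ → ℝ) (hσ : ContDiff ℝ 1 σ) (K : ℝ) (hK : ∀ x, |deriv σ x| ≤ K)
    (hrefl : ∀ (u : ℝ), ∀ v ∈ V,
      (∫ z, (h z * deriv σ (u + ⟪v, z - projSub S z⟫)) • projSub S z ∂gaussOn V) = 0) :
    ∀ w : Eu d,
      (∫ x, (h (projSub V x) * deriv σ ⟪w, x - projSub S x⟫) • projSub S x ∂stdGauss d) = 0 := by
  intro w
  classical
  obtain ⟨P, hP⟩ := hpoly
  obtain ⟨C, N, hCN⟩ := exists_poly_bound P
  have hhb : ∀ z : Eu d, |h z| ≤ C * (1 + ‖z‖) ^ N := fun z => by rw [hP z]; exact hCN z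
  have hK0 : (0:ℝ) ≤ K := le_trans (abs_nonneg _) (hK 0)
  have hhcont : Continuous h := by
    have hfun : h = (fun t => MvPolynomial.eval t P) ∘ (fun z : Eu d => fun i => z i) :=
      funext hP
    rw [hfun]
    exact (MvPolynomial.continuous_eval P).comp
      (continuous_pi fun i => (EuclideanSpace.proj i).continuous)
  have hσ' : Continuous (deriv σ) := hσ.continuous_deriv le_rfl
  set v : Eu d := projSub V w with hv
  have hvV : v ∈ V := SetLike.coe_mem _
  set w' : Eu d := w - projSub V w with hw'
  have hw'V : w' ∈ Vᗮ := Submodule.sub_starProjection_mem_orthogonal (K := V) w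
  set F : Eu d × Eu d → Eu d := fun yz =>
    (h yz.2 * deriv σ (⟪w', yz.1⟫ + ⟪v, yz.2 - projSub S yz.2⟫)) • projSub S yz.2 with hF
  set Φ : Eu d → Eu d × Eu d := fun x => (projSub Vᗮ x, projSub V x) with hΦ
  have hΦcont : Continuous Φ := (continuous_projSub Vᗮ).prodMk (continuous_projSub V)
  have hFcont : Continuous F := by
    refine Continuous.smul (?_ : Continuous fun yz : Eu d × Eu d =>
      h yz.2 * deriv σ (⟪w', yz.1⟫ + ⟪v, yz.2 - projSub S yz.2⟫))
      ((continuous_projSub S).comp continuous_snd)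
    refine Continuous.mul (hhcont.comp continuous_snd) (hσ'.comp ?_)
    exact (continuous_const.inner continuous_fst).add
      (continuous_const.inner (continuous_snd.sub
        ((continuous_projSub S).comp continuous_snd)))
  have hcomp : (fun x : Eu d =>
      (h (projSub V x) * deriv σ ⟪w, x - projSub S x⟫) • projSub S x) = F ∘ Φ := by
    funext x
    have hSx : projSub S (projSub V x) = projSub S x :=
      congrArg Subtype.val (Submodule.orthogonalProjectionOnto_starProjection_of_le hSV x)
    have hx : projSub V x + projSub Vᗮ x = x :=
      Submodule.starProjection_add_starProjection_orthogonal (K := V) x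
    have h1 : ⟪v, projSub Vᗮ x⟫ = 0 :=
      (Submodule.mem_orthogonal V (projSub Vᗮ x)).1 (SetLike.coe_mem _) v hvV
    have h2 : ⟪w', projSub V x⟫ = 0 := by
      rw [real_inner_comm]
      exact (Submodule.mem_orthogonal V w').1 hw'V _ (SetLike.coe_mem _)
    have h3 : ⟪w', projSub S x⟫ = 0 := by
      rw [real_inner_comm]
      exact (Submodule.mem_orthogonal V w').1 hw'V _ (hSV (SetLike.coe_mem _))
    have h4 : ⟪v, x⟫ = ⟪v, projSub V x⟫ := by
      conv_lhs => rw [← hx]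
      rw [inner_add_right, h1, add_zero]
    have h5 : ⟪w', x⟫ = ⟪w', projSub Vᗮ x⟫ := by
      conv_lhs => rw [← hx]
      rw [inner_add_right, h2, zero_add]
    have hw0 : v + w' = w := by rw [hv, hw']; exact add_sub_cancel _ _
    have hinner : ⟪w, x - projSub S x⟫
        = ⟪w', projSub Vᗮ x⟫ + ⟪v, projSub V x - projSub S x⟫ := by
      calc ⟪w, x - projSub S x⟫ = ⟪v + w', x - projSub S x⟫ := by rw [hw0]
        _ = ⟪v, x⟫ - ⟪v, projSub S x⟫ + (⟪w', x⟫ - ⟪w', projSub S x⟫) := by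
            rw [inner_add_left, inner_sub_right, inner_sub_right]
        _ = ⟪w', projSub Vᗮ x⟫ + ⟪v, projSub V x - projSub S x⟫ := by
            rw [h3, h4, h5, inner_sub_right]; ring
    show _ = (h (projSub V x) * deriv σ (⟪w', projSub Vᗮ x⟫
      + ⟪v, projSub V x - projSub S (projSub V x)⟫)) • projSub S (projSub V x)
    rw [hSx, hinner]
  have hfint : Integrable (fun x : Eu d =>
      (h (projSub V x) * deriv σ ⟪w, x - projSub S x⟫) • projSub S x) (stdGauss d) := by
    refine Integrable.mono' ((integrable_one_add_pow d (N + 1)).const_mul ((C : ℝ) * K)) ?_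
      (Filter.Eventually.of_forall fun x => ?_)
    · rw [hcomp]
      exact (hFcont.comp hΦcont).aestronglyMeasurable
    · have hx0 : (0:ℝ) ≤ ‖x‖ := norm_nonneg x
      have hb1 : |h (projSub V x)| ≤ (C : ℝ) * (1 + ‖x‖) ^ N := by
        refine le_trans (hhb _) (mul_le_mul_of_nonneg_left ?_ (by positivity))
        exact pow_le_pow_left₀ (by positivity)
          (add_le_add_right (norm_projSub_le V x) 1) N
      have hb3 : ‖projSub S x‖ ≤ 1 + ‖x‖ :=
        le_trans (norm_projSub_le S x) (le_add_of_nonneg_left zero_le_one)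
      calc ‖(h (projSub V x) * deriv σ ⟪w, x - projSub S x⟫) • projSub S x‖
          = |h (projSub V x)| * |deriv σ ⟪w, x - projSub S x⟫| * ‖projSub S x‖ := by
            rw [norm_smul, Real.norm_eq_abs, abs_mul]
        _ ≤ ((C : ℝ) * (1 + ‖x‖) ^ N) * K * (1 + ‖x‖) := by
            refine mul_le_mul (mul_le_mul hb1 (hK _) (abs_nonneg _) (by positivity))
              hb3 (norm_nonneg _) ?_
            exact mul_nonneg (by positivity) hK0
        _ = ((C : ℝ) * K) * (1 + ‖x‖) ^ (N + 1) := by ring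
  have hmapint : Integrable F ((gaussOn Vᗮ).prod (gaussOn V)) := by
    rw [← gauss_decomp V]
    refine (integrable_map_measure hFcont.aestronglyMeasurable
      hΦcont.measurable.aemeasurable).2 ?_
    rw [← hcomp]
    exact hfint
  calc (∫ x, (h (projSub V x) * deriv σ ⟪w, x - projSub S x⟫) • projSub S x ∂stdGauss d)
      = ∫ x, F (Φ x) ∂stdGauss d := by rw [hcomp]; rfl
    _ = ∫ q, F q ∂((stdGauss d).map Φ) :=
        (integral_map hΦcont.measurable.aemeasurable hFcont.aestronglyMeasurable).symm
    _ = ∫ q, F q ∂((gaussOn Vᗮ).prod (gaussOn V)) := by rw [hΦ, gauss_decomp V]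
    _ = ∫ y, ∫ z, F (y, z) ∂(gaussOn V) ∂(gaussOn Vᗮ) := integral_prod F hmapint
    _ = ∫ y, (0 : Eu d) ∂(gaussOn Vᗮ) := by
        refine integral_congr_ae (Filter.Eventually.of_forall fun y => ?_)
        have := hrefl ⟪w', y⟫ v hvV
        simpa [hF] using this
    _ = 0 := integral_zero _ _

end
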